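/- arXiv:2603.07658 — 3 statements merged into one kernel-verified Lean document; each statement's English description precedes it below -/
import Mathlib

section
/- Let Ω ⊂ ℝ³ be a bounded measurable set, and let H(p,q) ∈ ℝ³ be defined for q ∈ Ω and p in the convex hull of Ω with p ≠ q, such that for each fixed q ∈ Ω the map p ↦ H(p,q) is differentiable on (conv Ω) \ {q}. Suppose there is a constant C > 0 such that |H(p,q)| ≤ C |p−q|⁻² and |D_p H(p,q)| ≤ C |p−q|⁻³ whenever p ≠ q. Then for every f ∈ L^∞(Ω), the function F(p) := ∫_Ω H(p,q) f(q) dq is well defined with |F(p)| ≤ C ‖f‖_{L^∞} (vol(Ω) + 4π) for every p, and there is a constant C′ depending only on C and the diameter of Ω such that |F(p₁) − F(p₂)| ≤ C′ ‖f‖_{L^∞} λ(|p₁ − p₂|) for all p₁, p₂ ∈ Ω; that is, F is quasi-Lipschitz continuous. -/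
/-
In polar coordinates `∫_{|x - p| < ρ} |x - p|⁻² dx = 4πρ`, which gives integrability and, splitting
`Ω` at radius `1` around `p`, the bound `vol Ω + 4π`. For the modulus of continuity with
`d = |p₁ - p₂| < 1`, split `Ω` at radius `2d` around `p₁`. On the ball both kernels are bounded
separately, contributing `O(d)`. Off the ball the segment `[p₁, p₂]` stays at distance at least
`|p₁ - q| / 2` from `q`, so the mean value inequality gives
`|H(p₁, q) - H(p₂, q)| ≤ 8 C d |p₁ - q|⁻³`, and integrating `r⁻³` over the annulus between `2d`
and `2 max (diam Ω) 1` yields `O(d log (1 / d))`.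
-/

open MeasureTheory

noncomputable def qlLambda (d : ℝ) : ℝ := if 1 ≤ d then 1 else d * (1 - Real.log d)

open Metric Set Real
open scoped ENNReal

section Polar

variable {E : Type*} [NormedAddCommGroup E] [NormedSpace ℝ E] [Nontrivial E] [FiniteDimensional ℝ E]
  [MeasurableSpace E] [BorelSpace E] (μ : Measure E) [μ.IsAddHaarMeasure]

theorem lintegral_fun_norm_addHaar (g : ℝ → ℝ≥0∞) (hg : Measurable g) :
    ∫⁻ x, g ‖x‖ ∂μ = Module.finrank ℝ E * μ (ball 0 1) *
      ∫⁻ y in Ioi (0 : ℝ), ENNReal.ofReal (y ^ (Module.finrank ℝ E - 1)) * g y := by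
  have hgn : Measurable fun z : sphere (0 : E) 1 × Ioi (0 : ℝ) => g z.2 := by fun_prop
  calc ∫⁻ x, g ‖x‖ ∂μ = ∫⁻ x : ({0}ᶜ : Set E), g ‖(x : E)‖ ∂μ.comap (↑) := by
        rw [lintegral_subtype_comap (measurableSet_singleton 0).compl (fun x => g ‖x‖),
          restrict_compl_singleton]
    _ = ∫⁻ z, g z.2 ∂μ.toSphere.prod (.volumeIoiPow (Module.finrank ℝ E - 1)) := by
        simpa using μ.measurePreserving_homeomorphUnitSphereProd.lintegral_comp hgn
    _ = μ.toSphere univ * ∫⁻ y : Ioi (0 : ℝ), g y ∂.volumeIoiPow (Module.finrank ℝ E - 1) := by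
        rw [lintegral_prod _ hgn.aemeasurable]
        simp only [lintegral_const, mul_comm]
    _ = _ := by
        rw [μ.toSphere_apply_univ, Measure.volumeIoiPow,
          lintegral_withDensity_eq_lintegral_mul _ (by fun_prop) (by fun_prop),
          ← lintegral_subtype_comap measurableSet_Ioi
            (fun y : ℝ => ENNReal.ofReal (y ^ (Module.finrank ℝ E - 1)) * g y)]
        rfl

theorem setLIntegral_fun_dist_preimage_addHaar (p : E) {g : ℝ → ℝ≥0∞} (hg : Measurable g)
    {I : Set ℝ} (hI : MeasurableSet I) :
    ∫⁻ x in (dist · p) ⁻¹' I, g (dist x p) ∂μ = Module.finrank ℝ E * μ (ball 0 1) *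
      ∫⁻ y in I ∩ Ioi 0, ENNReal.ofReal (y ^ (Module.finrank ℝ E - 1)) * g y := by
  calc ∫⁻ x in (dist · p) ⁻¹' I, g (dist x p) ∂μ = ∫⁻ x, I.indicator g ‖x - p‖ ∂μ := by
        have hm : MeasurableSet ((dist · p) ⁻¹' I) := measurable_id.dist measurable_const hI
        rw [← lintegral_indicator hm]
        simp only [dist_eq_norm]
        rfl
    _ = ∫⁻ x, I.indicator g ‖x‖ ∂μ := lintegral_sub_right_eq_self (fun x => I.indicator g ‖x‖) p
    _ = _ := by
        rw [lintegral_fun_norm_addHaar μ _ (hg.indicator hI), ← Measure.restrict_restrict hI,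
          ← lintegral_indicator hI]
        simp only [indicator_mul_right]

end Polar

local notation "ℝ³" => EuclideanSpace ℝ (Fin 3)

theorem setLIntegral_fun_norm_sub_preimage_fin_three (p : ℝ³) {g : ℝ → ℝ≥0∞} (hg : Measurable g)
    {I : Set ℝ} (hI : MeasurableSet I) :
    ∫⁻ x in (‖p - ·‖) ⁻¹' I, g ‖p - x‖ =
      ENNReal.ofReal (4 * π) * ∫⁻ y in I ∩ Ioi 0, ENNReal.ofReal (y ^ 2) * g y := by
  have hball :
      (Module.finrank ℝ ℝ³ : ℝ≥0∞) * volume (ball (0 : ℝ³) 1) = ENNReal.ofReal (4 * π) := by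
    rw [EuclideanSpace.volume_ball_fin_three, finrank_euclideanSpace_fin, ENNReal.ofReal_one,
      one_pow, one_mul, ← ENNReal.ofReal_natCast, ← ENNReal.ofReal_mul (by norm_num)]
    ring_nf
  have key := setLIntegral_fun_dist_preimage_addHaar volume p hg hI
  rw [hball] at key
  simpa only [dist_eq_norm', finrank_euclideanSpace_fin, Nat.reduceSub] using key

theorem setLIntegral_ball_inv_norm_sq (p : ℝ³) (r : ℝ) :
    ∫⁻ x in ball p r, ENNReal.ofReal (‖p - x‖ ^ 2)⁻¹ = ENNReal.ofReal (4 * π * r) := by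
  have hball : ball p r = (‖p - ·‖) ⁻¹' Iio r := by ext x; simp [dist_eq_norm']
  rw [hball, setLIntegral_fun_norm_sub_preimage_fin_three p
      (g := fun y => ENNReal.ofReal (y ^ 2)⁻¹) (by fun_prop) measurableSet_Iio,
    Iio_inter_Ioi, setLIntegral_congr_fun measurableSet_Ioo (g := fun _ => 1), setLIntegral_one,
    Real.volume_Ioo, sub_zero, ← ENNReal.ofReal_mul (by positivity)]
  intro y hy
  have : 0 < y := hy.1
  dsimp only
  rw [← ENNReal.ofReal_mul (by positivity), mul_inv_cancel₀ (by positivity), ENNReal.ofReal_one]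

theorem setLIntegral_annulus_inv_norm_cube (p : ℝ³) {a b : ℝ} (ha : 0 < a) (hab : a ≤ b) :
    ∫⁻ x in closedBall p b \ ball p a, ENNReal.ofReal (‖p - x‖ ^ 3)⁻¹ =
      ENNReal.ofReal (4 * π * log (b / a)) := by
  have hannulus : closedBall p b \ ball p a = (‖p - ·‖) ⁻¹' Icc a b := by
    ext x; simp [dist_eq_norm', and_comm]
  have hpos : Icc a b ⊆ Ioi 0 := fun y hy => ha.trans_le hy.1
  have hInt : IntegrableOn (fun y : ℝ => y⁻¹) (Icc a b) :=
    (continuousOn_inv₀.mono fun y hy => (hpos hy).ne').integrableOn_Icc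
  rw [hannulus, setLIntegral_fun_norm_sub_preimage_fin_three p
      (g := fun y => ENNReal.ofReal (y ^ 3)⁻¹) (by fun_prop) measurableSet_Icc,
    inter_eq_left.mpr hpos,
    setLIntegral_congr_fun measurableSet_Icc (g := fun y => ENNReal.ofReal y⁻¹),
    ← ofReal_integral_eq_lintegral_ofReal hInt, integral_Icc_eq_integral_Ioc,
    ← intervalIntegral.integral_of_le hab, integral_inv_of_pos ha (ha.trans_le hab),
    ← ENNReal.ofReal_mul (by positivity)]
  · filter_upwards [ae_restrict_mem measurableSet_Icc] with y hy
    exact inv_nonneg.mpr (le_of_lt (hpos hy))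
  · intro y hy
    have : 0 < y := hpos hy
    dsimp only
    rw [← ENNReal.ofReal_mul (by positivity)]
    field_simp

theorem integrableOn_ball_inv_norm_sq (p : ℝ³) (r : ℝ) :
    IntegrableOn (fun x => (‖p - x‖ ^ 2)⁻¹) (ball p r) :=
  ⟨by fun_prop, (hasFiniteIntegral_iff_ofReal (.of_forall fun _ => by positivity)).2 <| by
    rw [setLIntegral_ball_inv_norm_sq]; exact ENNReal.ofReal_lt_top⟩

theorem setIntegral_ball_inv_norm_sq (p : ℝ³) {r : ℝ} (hr : 0 ≤ r) :
    ∫ x in ball p r, (‖p - x‖ ^ 2)⁻¹ = 4 * π * r := by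
  rw [integral_eq_lintegral_of_nonneg_ae (.of_forall fun _ => by positivity) (by fun_prop),
    setLIntegral_ball_inv_norm_sq, ENNReal.toReal_ofReal (by positivity)]

theorem integrableOn_annulus_inv_norm_cube (p : ℝ³) {a b : ℝ} (ha : 0 < a) (hab : a ≤ b) :
    IntegrableOn (fun x => (‖p - x‖ ^ 3)⁻¹) (closedBall p b \ ball p a) :=
  ⟨by fun_prop, (hasFiniteIntegral_iff_ofReal (.of_forall fun _ => by positivity)).2 <| by
    rw [setLIntegral_annulus_inv_norm_cube p ha hab]; exact ENNReal.ofReal_lt_top⟩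

theorem setIntegral_annulus_inv_norm_cube (p : ℝ³) {a b : ℝ} (ha : 0 < a) (hab : a ≤ b) :
    ∫ x in closedBall p b \ ball p a, (‖p - x‖ ^ 3)⁻¹ = 4 * π * log (b / a) := by
  have : 0 ≤ log (b / a) := log_nonneg ((one_le_div ha).mpr hab)
  rw [integral_eq_lintegral_of_nonneg_ae (.of_forall fun _ => by positivity) (by fun_prop),
    setLIntegral_annulus_inv_norm_cube p ha hab, ENNReal.toReal_ofReal (by positivity)]

theorem inv_norm_sq_le_indicator_ball_add_one (p x : ℝ³) :
    (‖p - x‖ ^ 2)⁻¹ ≤ (ball p 1).indicator (fun x => (‖p - x‖ ^ 2)⁻¹) x + 1 := by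
  by_cases hx : x ∈ ball p 1
  · rw [indicator_of_mem hx]; linarith
  · rw [indicator_of_notMem hx, zero_add]
    have : 1 ≤ ‖p - x‖ := by simpa [mem_ball, dist_eq_norm'] using hx
    exact inv_le_one_of_one_le₀ (one_le_pow₀ this)

theorem integrableOn_inv_norm_sq (p : ℝ³) {s : Set ℝ³} (hs : volume s ≠ ⊤) :
    IntegrableOn (fun x => (‖p - x‖ ^ 2)⁻¹) s := by
  refine Integrable.mono' (g := fun x => (ball p 1).indicator (fun x => (‖p - x‖ ^ 2)⁻¹) x + 1)
    ?_ (by fun_prop) (.of_forall fun x => ?_)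
  · exact ((integrable_indicator_iff measurableSet_ball).2
      (integrableOn_ball_inv_norm_sq p 1)).integrableOn.add (integrableOn_const hs)
  · rw [Real.norm_of_nonneg (by positivity)]
    exact inv_norm_sq_le_indicator_ball_add_one p x

theorem setIntegral_inv_norm_sq_le (p : ℝ³) {s : Set ℝ³} (hs : volume s ≠ ⊤) :
    ∫ x in s, (‖p - x‖ ^ 2)⁻¹ ≤ volume.real s + 4 * π := by
  have hind : Integrable ((ball p 1).indicator fun x => (‖p - x‖ ^ 2)⁻¹) :=
    (integrable_indicator_iff measurableSet_ball).2 (integrableOn_ball_inv_norm_sq p 1)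
  calc ∫ x in s, (‖p - x‖ ^ 2)⁻¹
      ≤ ∫ x in s, ((ball p 1).indicator (fun x => (‖p - x‖ ^ 2)⁻¹) x + 1) :=
        setIntegral_mono (integrableOn_inv_norm_sq p hs)
          (hind.integrableOn.add (integrableOn_const hs))
          (inv_norm_sq_le_indicator_ball_add_one p)
    _ = (∫ x in s, (ball p 1).indicator (fun x => (‖p - x‖ ^ 2)⁻¹) x) + volume.real s := by
        rw [integral_add hind.integrableOn (integrableOn_const hs), setIntegral_const, smul_eq_mul,
          mul_one]
    _ ≤ (∫ x, (ball p 1).indicator (fun x => (‖p - x‖ ^ 2)⁻¹) x) + volume.real s := by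
        gcongr
        · exact .of_forall fun x => indicator_nonneg (fun _ _ => by positivity) x
        · exact Measure.restrict_le_self
    _ = volume.real s + 4 * π := by
        rw [integral_indicator measurableSet_ball, setIntegral_ball_inv_norm_sq p zero_le_one,
          mul_one, add_comm]

section MeanValue

variable {E F : Type*} [NormedAddCommGroup E] [NormedSpace ℝ E] [NormedAddCommGroup F]
  [NormedSpace ℝ F]

theorem norm_sub_le_of_norm_hasFDerivWithinAt_le_inv_norm_cube {h : E → F} {h' : E → E →L[ℝ] F}
    {S : Set E} (hS : Convex ℝ S) {q p₁ p₂ : E} {C : ℝ} (hC : 0 ≤ C)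
    (hdiff : ∀ x ∈ S \ {q}, HasFDerivWithinAt h (h' x) (S \ {q}) x)
    (hbound : ∀ x ∈ S, x ≠ q → ‖h' x‖ ≤ C * (‖x - q‖ ^ 3)⁻¹)
    (hp₁ : p₁ ∈ S) (hp₂ : p₂ ∈ S) (hfar : 2 * ‖p₁ - p₂‖ ≤ ‖p₁ - q‖) :
    ‖h p₁ - h p₂‖ ≤ 8 * C * ‖p₁ - p₂‖ * (‖p₁ - q‖ ^ 3)⁻¹ := by
  rcases eq_or_ne p₁ q with rfl | hq
  · obtain rfl : p₁ = p₂ := by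
      rw [sub_self, norm_zero] at hfar
      exact sub_eq_zero.mp (norm_le_zero_iff.mp (by linarith))
    simp
  have hq' : 0 < ‖p₁ - q‖ := norm_pos_iff.mpr (sub_ne_zero.mpr hq)
  have hseg : ∀ x ∈ segment ℝ p₁ p₂, ‖p₁ - q‖ / 2 ≤ ‖x - q‖ := fun x hx => by
    have h₁ := dist_add_dist_of_mem_segment hx
    have h₂ := norm_sub_le_norm_sub_add_norm_sub p₁ x q
    simp only [dist_eq_norm] at h₁
    linarith [norm_nonneg (x - p₂)]
  have hsub : segment ℝ p₁ p₂ ⊆ S \ {q} := fun x hx =>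
    ⟨hS.segment_subset hp₁ hp₂ hx, fun hxq => by
      have := hseg x hx
      rw [mem_singleton_iff.mp hxq, sub_self, norm_zero] at this
      linarith⟩
  have hbound' : ∀ x ∈ segment ℝ p₁ p₂, ‖h' x‖ ≤ 8 * C * (‖p₁ - q‖ ^ 3)⁻¹ := fun x hx =>
    calc ‖h' x‖ ≤ C * (‖x - q‖ ^ 3)⁻¹ := hbound x (hsub hx).1 (hsub hx).2
      _ ≤ C * ((‖p₁ - q‖ / 2) ^ 3)⁻¹ := by gcongr; exact hseg x hx
      _ = 8 * C * (‖p₁ - q‖ ^ 3)⁻¹ := by ring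
  calc ‖h p₁ - h p₂‖ ≤ 8 * C * (‖p₁ - q‖ ^ 3)⁻¹ * ‖p₁ - p₂‖ :=
        (convex_segment p₁ p₂).norm_image_sub_le_of_norm_hasFDerivWithin_le
          (fun x hx => (hdiff x (hsub hx)).mono hsub) hbound'
          (right_mem_segment ℝ p₁ p₂) (left_mem_segment ℝ p₁ p₂)
    _ = 8 * C * ‖p₁ - p₂‖ * (‖p₁ - q‖ ^ 3)⁻¹ := by ring

end MeanValue

section SetIntegral

variable {α F : Type*} [MeasurableSpace α] [NormedAddCommGroup F] [NormedSpace ℝ F]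
  {μ : Measure α} {s : Set α} {f : α → ℝ} {g : α → F} {M : ℝ}

theorem ae_restrict_norm_smul_le [NullSingletonClass μ] (hs : MeasurableSet s) {k : α → ℝ}
    (p : α) (hg : ∀ q ∈ s, q ≠ p → ‖g q‖ ≤ k q) (hf : ∀ᵐ q ∂μ.restrict s, |f q| ≤ M) :
    ∀ᵐ q ∂μ.restrict s, ‖f q • g q‖ ≤ M * k q := by
  filter_upwards [hf, ae_restrict_mem hs, ae_restrict_of_ae (μ.ae_ne p)] with q hfq hq hqp
  rw [norm_smul, Real.norm_eq_abs]
  exact mul_le_mul hfq (hg q hq hqp) (norm_nonneg _) ((abs_nonneg _).trans hfq)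

theorem norm_setIntegral_smul_le [NullSingletonClass μ] (hs : MeasurableSet s) {k : α → ℝ}
    (p : α) (hk : IntegrableOn k s μ) (hg : ∀ q ∈ s, q ≠ p → ‖g q‖ ≤ k q)
    (hf : ∀ᵐ q ∂μ.restrict s, |f q| ≤ M) :
    ‖∫ q in s, f q • g q ∂μ‖ ≤ M * ∫ q in s, k q ∂μ :=
  (norm_integral_le_of_norm_le (hk.const_mul M) (ae_restrict_norm_smul_le hs p hg hf)).trans_eq
    (integral_const_mul _ _)

theorem setIntegral_sub_setIntegral_eq_inter_add_sdiff {t : Set α} (ht : MeasurableSet t)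
    {g₁ g₂ : α → F} (h₁ : IntegrableOn g₁ s μ) (h₂ : IntegrableOn g₂ s μ) :
    (∫ x in s, g₁ x ∂μ) - ∫ x in s, g₂ x ∂μ =
      ((∫ x in s ∩ t, g₁ x ∂μ) - ∫ x in s ∩ t, g₂ x ∂μ) + ∫ x in s \ t, (g₁ x - g₂ x) ∂μ := by
  rw [← integral_inter_add_sdiff ht h₁, ← integral_inter_add_sdiff ht h₂,
    integral_sub (h₁.mono_set sdiff_subset) (h₂.mono_set sdiff_subset)]
  abel

end SetIntegral

section Potential

variable {F : Type*} [NormedAddCommGroup F] [NormedSpace ℝ F] {s : Set ℝ³} {f : ℝ³ → ℝ}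
  {g : ℝ³ → F} {M C : ℝ}

theorem integrableOn_smul_of_norm_le_inv_norm_sq (hs : MeasurableSet s) (hs' : volume s ≠ ⊤)
    (p : ℝ³) (hgm : AEStronglyMeasurable g (volume.restrict s))
    (hfm : AEStronglyMeasurable f (volume.restrict s))
    (hg : ∀ q ∈ s, q ≠ p → ‖g q‖ ≤ C * (‖p - q‖ ^ 2)⁻¹)
    (hf : ∀ᵐ q ∂volume.restrict s, |f q| ≤ M) :
    IntegrableOn (fun q => f q • g q) s :=
  (((integrableOn_inv_norm_sq p hs').const_mul C).const_mul M).mono' (hfm.smul hgm)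
    (ae_restrict_norm_smul_le hs p hg hf)

theorem norm_setIntegral_smul_le_of_norm_le_inv_norm_sq (hs : MeasurableSet s)
    (hs' : volume s ≠ ⊤) (hC : 0 ≤ C) (hM : 0 ≤ M) (p : ℝ³)
    (hg : ∀ q ∈ s, q ≠ p → ‖g q‖ ≤ C * (‖p - q‖ ^ 2)⁻¹)
    (hf : ∀ᵐ q ∂volume.restrict s, |f q| ≤ M) :
    ‖∫ q in s, f q • g q‖ ≤ C * M * (volume.real s + 4 * π) :=
  calc ‖∫ q in s, f q • g q‖ ≤ M * ∫ q in s, C * (‖p - q‖ ^ 2)⁻¹ :=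
        norm_setIntegral_smul_le hs p ((integrableOn_inv_norm_sq p hs').const_mul C) hg hf
    _ ≤ M * (C * (volume.real s + 4 * π)) := by
        rw [integral_const_mul]
        gcongr
        exact setIntegral_inv_norm_sq_le p hs'
    _ = C * M * (volume.real s + 4 * π) := by ring

theorem norm_setIntegral_smul_le_of_subset_ball (hs : MeasurableSet s) (hC : 0 ≤ C) (hM : 0 ≤ M)
    {p : ℝ³} {r : ℝ} (hr : 0 ≤ r) (hsr : s ⊆ ball p r)
    (hg : ∀ q ∈ s, q ≠ p → ‖g q‖ ≤ C * (‖p - q‖ ^ 2)⁻¹)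
    (hf : ∀ᵐ q ∂volume.restrict s, |f q| ≤ M) :
    ‖∫ q in s, f q • g q‖ ≤ 4 * π * C * M * r :=
  calc ‖∫ q in s, f q • g q‖ ≤ M * ∫ q in s, C * (‖p - q‖ ^ 2)⁻¹ :=
        norm_setIntegral_smul_le hs p
          (((integrableOn_ball_inv_norm_sq p r).mono_set hsr).const_mul C) hg hf
    _ ≤ M * (C * ∫ q in ball p r, (‖p - q‖ ^ 2)⁻¹) := by
        rw [integral_const_mul]
        gcongr M * (C * ?_)
        exact setIntegral_mono_set (integrableOn_ball_inv_norm_sq p r)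
          (.of_forall fun _ => by positivity) hsr.eventuallyLE
    _ = 4 * π * C * M * r := by rw [setIntegral_ball_inv_norm_sq p hr]; ring

theorem norm_setIntegral_smul_le_of_subset_annulus (hs : MeasurableSet s) (hM : 0 ≤ M)
    {p : ℝ³} {a b K : ℝ} (hK : 0 ≤ K) (ha : 0 < a) (hab : a ≤ b)
    (hsab : s ⊆ closedBall p b \ ball p a)
    (hg : ∀ q ∈ s, q ≠ p → ‖g q‖ ≤ K * (‖p - q‖ ^ 3)⁻¹)
    (hf : ∀ᵐ q ∂volume.restrict s, |f q| ≤ M) :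
    ‖∫ q in s, f q • g q‖ ≤ 4 * π * K * M * log (b / a) :=
  calc ‖∫ q in s, f q • g q‖ ≤ M * ∫ q in s, K * (‖p - q‖ ^ 3)⁻¹ :=
        norm_setIntegral_smul_le hs p
          (((integrableOn_annulus_inv_norm_cube p ha hab).mono_set hsab).const_mul K) hg hf
    _ ≤ M * (K * ∫ q in closedBall p b \ ball p a, (‖p - q‖ ^ 3)⁻¹) := by
        rw [integral_const_mul]
        gcongr M * (K * ?_)
        exact setIntegral_mono_set (integrableOn_annulus_inv_norm_cube p ha hab)
          (.of_forall fun _ => by positivity) hsab.eventuallyLE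
    _ = 4 * π * K * M * log (b / a) := by rw [setIntegral_annulus_inv_norm_cube p ha hab]; ring

end Potential

theorem norm_setIntegral_smul_sub_le {F : Type*} [NormedAddCommGroup F] [NormedSpace ℝ F]
    {Ω S : Set ℝ³} {f : ℝ³ → ℝ} {M C : ℝ} (hΩ : MeasurableSet Ω) (hS : Convex ℝ S) (hC : 0 ≤ C)
    (hM : 0 ≤ M) {H : ℝ³ → ℝ³ → F} {H' : ℝ³ → ℝ³ → ℝ³ →L[ℝ] F}
    (hdiff : ∀ q ∈ Ω, ∀ p ∈ S \ {q}, HasFDerivWithinAt (fun p' => H p' q) (H' p q) (S \ {q}) p)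
    (hH : ∀ q ∈ Ω, ∀ p ∈ S, p ≠ q → ‖H p q‖ ≤ C * (‖p - q‖ ^ 2)⁻¹)
    (hH' : ∀ q ∈ Ω, ∀ p ∈ S, p ≠ q → ‖H' p q‖ ≤ C * (‖p - q‖ ^ 3)⁻¹)
    (hf : ∀ᵐ q ∂volume.restrict Ω, |f q| ≤ M) {p₁ p₂ : ℝ³} (hp₁ : p₁ ∈ S) (hp₂ : p₂ ∈ S)
    (hint₁ : IntegrableOn (fun q => f q • H p₁ q) Ω)
    (hint₂ : IntegrableOn (fun q => f q • H p₂ q) Ω) {D : ℝ} (hΩD : Ω ⊆ closedBall p₁ D)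
    (hd : 0 < ‖p₁ - p₂‖) (hdD : ‖p₁ - p₂‖ ≤ D) :
    ‖(∫ q in Ω, f q • H p₁ q) - ∫ q in Ω, f q • H p₂ q‖ ≤
      32 * π * C * M * (‖p₁ - p₂‖ * (1 + log (D / ‖p₁ - p₂‖))) := by
  set d := ‖p₁ - p₂‖
  set B := ball p₁ (2 * d)
  have hnear₁ : ‖∫ q in Ω ∩ B, f q • H p₁ q‖ ≤ 4 * π * C * M * (2 * d) :=
    norm_setIntegral_smul_le_of_subset_ball (hΩ.inter measurableSet_ball) hC hM (by positivity)
      inter_subset_right (fun q hq hqp => hH q hq.1 p₁ hp₁ hqp.symm)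
      (ae_restrict_of_ae_restrict_of_subset inter_subset_left hf)
  have hB : B ⊆ ball p₂ (3 * d) := fun q hq => by
    have := dist_triangle q p₁ p₂
    rw [dist_eq_norm p₁ p₂] at this
    rw [mem_ball] at hq ⊢
    linarith
  have hnear₂ : ‖∫ q in Ω ∩ B, f q • H p₂ q‖ ≤ 4 * π * C * M * (3 * d) :=
    norm_setIntegral_smul_le_of_subset_ball (hΩ.inter measurableSet_ball) hC hM (by positivity)
      (inter_subset_right.trans hB) (fun q hq hqp => hH q hq.1 p₂ hp₂ hqp.symm)
      (ae_restrict_of_ae_restrict_of_subset inter_subset_left hf)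
  have hannulus : Ω \ B ⊆ closedBall p₁ (2 * D) \ ball p₁ (2 * d) := fun q hq =>
    ⟨closedBall_subset_closedBall (by linarith) (hΩD hq.1), hq.2⟩
  have hfar : ‖∫ q in Ω \ B, f q • (H p₁ q - H p₂ q)‖ ≤ 4 * π * (8 * C * d) * M * log (D / d) := by
    rw [← mul_div_mul_left D d two_ne_zero]
    refine norm_setIntegral_smul_le_of_subset_annulus (hΩ.diff measurableSet_ball) hM
      (by positivity) (by positivity) (by linarith) hannulus (fun q hq _ => ?_)
      (ae_restrict_of_ae_restrict_of_subset sdiff_subset hf)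
    have hq₁ : 2 * d ≤ ‖p₁ - q‖ := by
      simpa [B, mem_ball, dist_eq_norm'] using hq.2
    exact norm_sub_le_of_norm_hasFDerivWithinAt_le_inv_norm_cube hS hC (hdiff q hq.1)
      (hH' q hq.1) hp₁ hp₂ hq₁
  have hπCMd : 0 ≤ π * C * M * d := by positivity
  rw [setIntegral_sub_setIntegral_eq_inter_add_sdiff measurableSet_ball hint₁ hint₂]
  simp only [← smul_sub]
  calc _ ≤ ‖∫ q in Ω ∩ B, f q • H p₁ q‖ + ‖∫ q in Ω ∩ B, f q • H p₂ q‖ +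
        ‖∫ q in Ω \ B, f q • (H p₁ q - H p₂ q)‖ :=
        (norm_add_le _ _).trans (add_le_add_left (norm_sub_le _ _) _)
    _ ≤ _ := by nlinarith

theorem qlLambda_of_one_le {d : ℝ} (hd : 1 ≤ d) : qlLambda d = 1 := if_pos hd

theorem qlLambda_of_lt_one {d : ℝ} (hd : d < 1) : qlLambda d = d * (1 - log d) := if_neg hd.not_ge

theorem qlLambda_nonneg {d : ℝ} (hd : 0 ≤ d) : 0 ≤ qlLambda d := by
  rcases le_or_gt 1 d with h | h
  · rw [qlLambda_of_one_le h]; exact zero_le_one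
  · rw [qlLambda_of_lt_one h]
    have := log_nonpos hd h.le
    nlinarith

theorem mul_one_add_log_div_le_mul_qlLambda {d D : ℝ} (hd : 0 < d) (hd1 : d < 1) (hD : 1 ≤ D) :
    d * (1 + log (D / d)) ≤ (1 + log D) * qlLambda d := by
  rw [qlLambda_of_lt_one hd1, log_div (by positivity) hd.ne']
  have : 0 ≤ d * log D * -log d :=
    mul_nonneg (mul_nonneg hd.le (log_nonneg hD)) (neg_nonneg.mpr (log_nonpos hd.le hd1.le))
  nlinarith

theorem le_mul_qlLambda {x A K d D : ℝ} (hA : 0 ≤ A) (hK : 0 ≤ K) (hD : 1 ≤ D) (hd : 0 < d)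
    (hx : x ≤ A) (hx_lt_one : d < 1 → x ≤ K * (d * (1 + log (D / d)))) :
    x ≤ (A + K * (1 + log D)) * qlLambda d := by
  have hlogD := log_nonneg hD
  have hlam := qlLambda_nonneg hd.le
  rcases le_or_gt 1 d with hd1 | hd1
  · rw [qlLambda_of_one_le hd1]
    nlinarith [mul_nonneg hK hlogD]
  · calc x ≤ K * (d * (1 + log (D / d))) := hx_lt_one hd1
      _ ≤ K * ((1 + log D) * qlLambda d) :=
        mul_le_mul_of_nonneg_left (mul_one_add_log_div_le_mul_qlLambda hd hd1 hD) hK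
      _ ≤ _ := by nlinarith [mul_nonneg hA hlam]

/-- Regularity of the potential: for a kernel `H(p,q) ∈ ℝ³` on a bounded measurable
`Ω ⊆ ℝ³`, differentiable in `p` on `(conv Ω) \ {q}` with `|H(p,q)| ≤ C |p-q|⁻²` and
`|D_p H(p,q)| ≤ C |p-q|⁻³`, and any `f ∈ L^∞(Ω)` with `‖f‖_∞ ≤ M`, the function
`F(p) = ∫_Ω H(p,q) f(q) dq` is well defined with `|F(p)| ≤ C M (vol(Ω) + 4π)`, and `F`
is quasi-Lipschitz on `Ω`: `|F(p₁) - F(p₂)| ≤ C' M λ(|p₁ - p₂|)` for a constant `C'`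
depending only on `C` and the diameter of `Ω`. -/
theorem potential_bounded_and_quasiLipschitz
    (Ω : Set (EuclideanSpace ℝ (Fin 3))) (hmeas : MeasurableSet Ω)
    (hbdd : Bornology.IsBounded Ω)
    (C : ℝ) (hC : 0 < C)
    (H : EuclideanSpace ℝ (Fin 3) → EuclideanSpace ℝ (Fin 3) → EuclideanSpace ℝ (Fin 3))
    (H' : EuclideanSpace ℝ (Fin 3) → EuclideanSpace ℝ (Fin 3) →
      (EuclideanSpace ℝ (Fin 3) →L[ℝ] EuclideanSpace ℝ (Fin 3)))
    (hHmeas : ∀ p, AEStronglyMeasurable (fun q => H p q) (volume.restrict Ω))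
    (hdiff : ∀ q ∈ Ω, ∀ p ∈ (convexHull ℝ Ω) \ {q},
      HasFDerivWithinAt (fun p' => H p' q) (H' p q) ((convexHull ℝ Ω) \ {q}) p)
    (hH : ∀ q ∈ Ω, ∀ p ∈ convexHull ℝ Ω, p ≠ q → ‖H p q‖ ≤ C * (‖p - q‖ ^ 2)⁻¹)
    (hH' : ∀ q ∈ Ω, ∀ p ∈ convexHull ℝ Ω, p ≠ q → ‖H' p q‖ ≤ C * (‖p - q‖ ^ 3)⁻¹)
    (f : EuclideanSpace ℝ (Fin 3) → ℝ)
    (hfmeas : AEStronglyMeasurable f (volume.restrict Ω))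
    (M : ℝ) (hM : 0 ≤ M) (hf : ∀ᵐ q ∂(volume.restrict Ω), |f q| ≤ M) :
    (∀ p ∈ convexHull ℝ Ω, IntegrableOn (fun q => f q • H p q) Ω) ∧
    (∀ p ∈ convexHull ℝ Ω,
      ‖∫ q in Ω, f q • H p q‖ ≤ C * M * ((volume Ω).toReal + 4 * Real.pi)) ∧
    (∃ C' > (0 : ℝ), ∀ p₁ ∈ Ω, ∀ p₂ ∈ Ω,
      ‖(∫ q in Ω, f q • H p₁ q) - ∫ q in Ω, f q • H p₂ q‖
        ≤ C' * M * qlLambda ‖p₁ - p₂‖) := by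
  have hvol : volume Ω ≠ ⊤ := hbdd.measure_lt_top.ne
  have hint : ∀ p ∈ convexHull ℝ Ω, IntegrableOn (fun q => f q • H p q) Ω := fun p hp =>
    integrableOn_smul_of_norm_le_inv_norm_sq hmeas hvol p (hHmeas p) hfmeas
      (fun q hq hqp => hH q hq p hp hqp.symm) hf
  have hbound : ∀ p ∈ convexHull ℝ Ω,
      ‖∫ q in Ω, f q • H p q‖ ≤ C * M * ((volume Ω).toReal + 4 * π) := fun p hp =>
    norm_setIntegral_smul_le_of_norm_le_inv_norm_sq hmeas hvol hC.le hM p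
      (fun q hq hqp => hH q hq p hp hqp.symm) hf
  set D := max (diam Ω) 1
  have hlogD : 0 ≤ log D := log_nonneg (le_max_right _ _)
  refine ⟨hint, hbound, 2 * C * ((volume Ω).toReal + 4 * π) + 32 * π * C * (1 + log D),
    by positivity, fun p₁ hp₁ p₂ hp₂ => ?_⟩
  rcases eq_or_ne p₁ p₂ with rfl | hne
  · simp [qlLambda_of_lt_one zero_lt_one]
  have hd : 0 < ‖p₁ - p₂‖ := norm_pos_iff.mpr (sub_ne_zero.mpr hne)
  have hp₁' := subset_convexHull ℝ Ω hp₁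
  have hp₂' := subset_convexHull ℝ Ω hp₂
  have hΩD : Ω ⊆ closedBall p₁ D := fun q hq =>
    mem_closedBall.mpr ((dist_le_diam_of_mem hbdd hq hp₁).trans (le_max_left _ _))
  have hdD : ‖p₁ - p₂‖ ≤ D :=
    (dist_eq_norm p₁ p₂ ▸ dist_le_diam_of_mem hbdd hp₁ hp₂).trans (le_max_left _ _)
  calc _ ≤ (2 * (C * M * ((volume Ω).toReal + 4 * π)) + 32 * π * C * M * (1 + log D)) *
        qlLambda ‖p₁ - p₂‖ :=
      le_mul_qlLambda (by positivity) (by positivity) (le_max_right _ _) hd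
        ((norm_sub_le _ _).trans (by linarith [hbound p₁ hp₁', hbound p₂ hp₂']))
        fun _ => norm_setIntegral_smul_sub_le hmeas (convex_convexHull ℝ Ω) hC.le hM hdiff hH hH'
          hf hp₁' hp₂' (hint p₁ hp₁') (hint p₂ hp₂') hΩD hd hdD
    _ = _ := by ring
end

section
/- Let T > 0, A > 0, and let δ : [0,T] → [0,∞) be continuous such that for every ε ∈ (0,1) and every t ∈ [0,T], δ(t) ≤ −A (log ε) ∫₀ᵗ δ(τ) dτ + A ε t. Then δ(t) ≤ A t ε^{1 − A t} for every ε ∈ (0,1) and t ∈ [0,T]; consequently δ(t) = 0 for every t ∈ [0,T] with A t < 1. -/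
open Real MeasureTheory intervalIntegral Set Filter Topology

/-- Key step: for fixed `ε` and `t`, Gronwall gives the bound. -/
lemma eps_gronwall_key (T A : ℝ) (hT : 0 < T) (hA : 0 < A)
    (δ : ℝ → ℝ) (hcont : ContinuousOn δ (Set.Icc 0 T))
    (hnonneg : ∀ t ∈ Set.Icc (0 : ℝ) T, 0 ≤ δ t)
    (hineq : ∀ ε ∈ Set.Ioo (0 : ℝ) 1, ∀ t ∈ Set.Icc (0 : ℝ) T,
      δ t ≤ -A * Real.log ε * (∫ τ in (0 : ℝ)..t, δ τ) + A * ε * t)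
    {ε : ℝ} (hε : ε ∈ Set.Ioo (0 : ℝ) 1) {t : ℝ} (ht : t ∈ Set.Icc (0 : ℝ) T) :
    δ t ≤ A * t * ε ^ (1 - A * t) := by
  obtain ⟨hε0, hε1⟩ := hε
  obtain ⟨ht0, htT⟩ := ht
  have hlog : Real.log ε < 0 := Real.log_neg hε0 hε1
  set β : ℝ := -A * Real.log ε with hβdef
  have hβ : 0 < β := by rw [hβdef]; nlinarith
  set F : ℝ → ℝ := fun x => ∫ τ in (0 : ℝ)..x, δ τ with hFdef
  -- integrability on Icc 0 T
  have hInt : IntegrableOn δ (Set.Icc 0 T) := hcont.integrableOn_compact isCompact_Icc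
  have hIntuIcc : IntegrableOn δ (Set.uIcc 0 t) := by
    rw [Set.uIcc_of_le ht0]
    exact hInt.mono (Set.Icc_subset_Icc le_rfl htT) le_rfl
  -- continuity of F on Icc 0 t
  have hFcont : ContinuousOn F (Set.Icc 0 t) := by
    have := intervalIntegral.continuousOn_primitive_interval (a := (0:ℝ)) (b := t)
      (μ := volume) (f := δ) hIntuIcc
    rwa [Set.uIcc_of_le ht0] at this
  -- derivative of F from the right
  have hFderiv : ∀ x ∈ Set.Ico (0:ℝ) t, HasDerivWithinAt F (δ x) (Set.Ici x) x := by
    intro x hx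
    have hxT : x < T := lt_of_lt_of_le hx.2 htT
    have hIntx : IntervalIntegrable δ volume 0 x := by
      apply ContinuousOn.intervalIntegrable
      rw [Set.uIcc_of_le hx.1]
      exact hcont.mono (Set.Icc_subset_Icc le_rfl hxT.le)
    have hmemIoi : Set.Icc 0 T ∈ 𝓝[>] x := by
      apply mem_nhdsWithin.2
      exact ⟨Set.Iio T, isOpen_Iio, hxT, fun y hy => ⟨le_trans hx.1 hy.2.le, hy.1.le⟩⟩
    have hmeas : StronglyMeasurableAtFilter δ (𝓝[>] x) volume :=
      ⟨Set.Icc 0 T, hmemIoi, hcont.aestronglyMeasurable measurableSet_Icc⟩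
    have hctsW : ContinuousWithinAt δ (Set.Ioi x) x := by
      have h1 : ContinuousWithinAt δ (Set.Icc 0 T) x := hcont x ⟨hx.1, hxT.le⟩
      exact h1.mono_of_mem_nhdsWithin hmemIoi
    exact intervalIntegral.integral_hasDerivWithinAt_right hIntx hmeas hctsW
  -- nonnegativity of F
  have hFnonneg : ∀ x ∈ Set.Icc (0:ℝ) t, 0 ≤ F x := by
    intro x hx
    apply intervalIntegral.integral_nonneg hx.1
    intro u hu
    exact hnonneg u ⟨hu.1, le_trans hu.2 (le_trans hx.2 htT)⟩
  -- bound on the derivative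
  have hbound : ∀ x ∈ Set.Ico (0:ℝ) t, ‖δ x‖ ≤ β * ‖F x‖ + A * ε * t := by
    intro x hx
    have hxIcc : x ∈ Set.Icc (0:ℝ) T := ⟨hx.1, le_trans hx.2.le htT⟩
    rw [Real.norm_of_nonneg (hnonneg x hxIcc),
      Real.norm_of_nonneg (hFnonneg x ⟨hx.1, hx.2.le⟩)]
    calc δ x ≤ -A * Real.log ε * F x + A * ε * x := hineq ε ⟨hε0, hε1⟩ x hxIcc
      _ ≤ β * F x + A * ε * t := by
          refine add_le_add (le_of_eq rfl) ?_
          exact mul_le_mul_of_nonneg_left hx.2.le (by positivity)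
  -- Gronwall
  have hG := norm_le_gronwallBound_of_norm_deriv_right_le (f := F) (f' := δ)
    (δ := 0) (K := β) (ε := A * ε * t) (a := 0) (b := t)
    hFcont hFderiv (by simp [hFdef]) hbound t ⟨ht0, le_rfl⟩
  have hFt : F t ≤ A * ε * t / β * (Real.exp (β * t) - 1) := by
    have h1 : ‖F t‖ = F t := Real.norm_of_nonneg (hFnonneg t ⟨ht0, le_rfl⟩)
    rw [h1] at hG
    rw [gronwallBound_of_K_ne_0 (ne_of_gt hβ)] at hG
    simpa using hG
  have hexp : Real.exp (β * t) = ε ^ (-(A * t)) := by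
    rw [Real.rpow_def_of_pos hε0]
    congr 1
    ring
  -- final computation
  have hδt : δ t ≤ -A * Real.log ε * F t + A * ε * t :=
    hineq ε ⟨hε0, hε1⟩ t ⟨ht0, htT⟩
  have hβF : β * F t ≤ A * ε * t * (Real.exp (β * t) - 1) := by
    calc β * F t ≤ β * (A * ε * t / β * (Real.exp (β * t) - 1)) := by
          apply mul_le_mul_of_nonneg_left hFt hβ.le
      _ = A * ε * t * (Real.exp (β * t) - 1) := by
          field_simp
  have : δ t ≤ A * ε * t * Real.exp (β * t) := by
    have : δ t ≤ β * F t + A * ε * t := hδt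
    nlinarith [hβF]
  calc δ t ≤ A * ε * t * Real.exp (β * t) := this
    _ = A * t * ε ^ (1 - A * t) := by
        rw [hexp, show (1 : ℝ) - A * t = 1 + (-(A * t)) by ring,
          Real.rpow_add hε0, Real.rpow_one]
        ring

/-- ε-parametrized Gronwall estimate: if a continuous nonnegative `δ` on `[0,T]` satisfies
`δ(t) ≤ -A (log ε) ∫₀ᵗ δ + A ε t` for every `ε ∈ (0,1)`, then
`δ(t) ≤ A t ε^{1 - A t}` for every such `ε`, and hence `δ(t) = 0` whenever `A t < 1`. -/
theorem eps_gronwall (T A : ℝ) (hT : 0 < T) (hA : 0 < A)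
    (δ : ℝ → ℝ) (hcont : ContinuousOn δ (Set.Icc 0 T))
    (hnonneg : ∀ t ∈ Set.Icc (0 : ℝ) T, 0 ≤ δ t)
    (hineq : ∀ ε ∈ Set.Ioo (0 : ℝ) 1, ∀ t ∈ Set.Icc (0 : ℝ) T,
      δ t ≤ -A * Real.log ε * (∫ τ in (0 : ℝ)..t, δ τ) + A * ε * t) :
    (∀ ε ∈ Set.Ioo (0 : ℝ) 1, ∀ t ∈ Set.Icc (0 : ℝ) T,
      δ t ≤ A * t * ε ^ (1 - A * t)) ∧
    (∀ t ∈ Set.Icc (0 : ℝ) T, A * t < 1 → δ t = 0) := by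
  have key : ∀ ε ∈ Set.Ioo (0 : ℝ) 1, ∀ t ∈ Set.Icc (0 : ℝ) T,
      δ t ≤ A * t * ε ^ (1 - A * t) := fun ε hε t ht =>
    eps_gronwall_key T A hT hA δ hcont hnonneg hineq hε ht
  refine ⟨key, fun t ht hAt => ?_⟩
  have hle : δ t ≤ 0 := by
    have htend : Tendsto (fun ε : ℝ => A * t * ε ^ (1 - A * t)) (𝓝[>] 0) (𝓝 0) := by
      have hy : (0:ℝ) < 1 - A * t := by linarith
      have h1 : Tendsto (fun ε : ℝ => ε ^ (1 - A * t)) (𝓝 0) (𝓝 ((0:ℝ) ^ (1 - A * t))) :=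
        (Real.continuousAt_rpow_const 0 (1 - A * t) (Or.inr hy.le)).tendsto
      rw [Real.zero_rpow (ne_of_gt hy)] at h1
      have h2 : Tendsto (fun ε : ℝ => A * t * ε ^ (1 - A * t)) (𝓝 0) (𝓝 (A * t * 0)) :=
        (tendsto_const_nhds.mul h1)
      rw [mul_zero] at h2
      exact h2.mono_left nhdsWithin_le_nhds
    refine ge_of_tendsto htend ?_
    filter_upwards [Ioo_mem_nhdsGT_of_mem (Set.mem_Ico.2 ⟨le_rfl, one_pos⟩)] with ε hε
    exact key ε hε t ht
  exact le_antisymm hle (hnonneg t ht)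
end

section
/- Let T > 0, C > 0, y₀ ∈ [0,1], and let y : [0,T] → [0,1] be continuous with y(t) ≤ y₀ + C ∫₀ᵗ λ(y(τ)) dτ for all t ∈ [0,T]. Then y(t) ≤ y₀^{exp(−C t)} · e^{1 − exp(−C t)} for all t ∈ [0,T] (with the convention 0^s = 0 for s > 0). -/
open Set Filter Topology Real

theorem lt_on_Icc_of_forall_le_imp_lt {f g : ℝ → ℝ} {a b : ℝ}
    (hf : ContinuousOn f (Icc a b)) (hg : ContinuousOn g (Icc a b)) (h₀ : f a < g a)
    (hstep : ∀ t ∈ Ioc a b, (∀ s ∈ Icc a t, f s ≤ g s) → f t < g t) :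
    ∀ t ∈ Icc a b, f t < g t := by
  by_contra! hcross
  set A := {t ∈ Icc a b | g t ≤ f t}
  have hA : IsClosed A := isClosed_Icc.isClosed_le hg hf
  have hAne : A.Nonempty := let ⟨t, ht, hgf⟩ := hcross; ⟨t, ht, hgf⟩
  have hAbdd : BddBelow A := ⟨a, fun t ht => ht.1.1⟩
  obtain ⟨⟨hat, htb⟩, hgf⟩ : sInf A ∈ A := hA.csInf_mem hAne hAbdd
  set t := sInf A
  have hat' : a < t := hat.lt_of_ne fun hat => (hgf.trans_lt (hat ▸ h₀)).false
  have hbefore : ∀ s ∈ Ico a t, f s < g s := fun s hs =>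
    not_le.1 fun hgs => notMem_of_lt_csInf hs.2 hAbdd ⟨⟨hs.1, hs.2.le.trans htb⟩, hgs⟩
  have hupto : ∀ s ∈ Icc a t, f s ≤ g s := by
    have hsub : Icc a t ⊆ Icc a b := Icc_subset_Icc_right htb
    rw [← closure_Ico hat'.ne] at hsub ⊢
    exact le_on_closure (fun s hs => (hbefore s hs).le) (hf.mono hsub) (hg.mono hsub)
  exact (hstep t ⟨hat', htb⟩ hupto).not_ge hgf

theorem qlLambda_of_le_one {d : ℝ} (hd : d ≤ 1) : qlLambda d = d * (1 - log d) := by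
  rcases hd.lt_or_eq with hd | rfl
  · exact if_neg hd.not_ge
  · simp [qlLambda]

theorem continuous_mul_one_sub_log : Continuous fun d : ℝ => d * (1 - log d) :=
  (continuous_id.sub continuous_mul_log).congr fun d => by simp only [Pi.sub_apply, id]; ring

theorem continuous_qlLambda : Continuous qlLambda :=
  continuous_const.if_le continuous_mul_one_sub_log
    continuous_const continuous_id fun d hd => by simp [← hd]

theorem monotoneOn_qlLambda : MonotoneOn qlLambda (Icc 0 1) := by
  have hderiv : ∀ d ∈ interior (Icc (0 : ℝ) 1),
      HasDerivAt (fun d => d * (1 - log d)) (-log d) d := fun d hd => by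
    rw [interior_Icc] at hd
    have h : HasDerivAt (fun x => x - x * log x) (1 - (log d + 1)) d :=
      (hasDerivAt_id' d).sub (hasDerivAt_mul_log hd.1.ne')
    convert h using 1
    · funext x; ring
    · ring
  have hmono : MonotoneOn (fun d => d * (1 - log d)) (Icc 0 1) := by
    refine monotoneOn_of_deriv_nonneg (convex_Icc 0 1) ?_
      (fun d hd => (hderiv d hd).differentiableAt.differentiableWithinAt) fun d hd => ?_
    · exact continuous_mul_one_sub_log.continuousOn
    · rw [(hderiv d hd).deriv, neg_nonneg]
      rw [interior_Icc] at hd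
      exact log_nonpos hd.1.le hd.2.le
  intro x hx z hz hxz
  rw [qlLambda_of_le_one hx.2, qlLambda_of_le_one hz.2]
  exact hmono hx hz hxz

noncomputable def osgoodSol (C a t : ℝ) : ℝ := exp (1 + exp (-(C * t)) * (log a - 1))

theorem osgoodSol_zero (C : ℝ) {a : ℝ} (ha : 0 < a) : osgoodSol C a 0 = a := by
  simp [osgoodSol, exp_log ha]

theorem osgoodSol_eq_rpow (C t : ℝ) {a : ℝ} (ha : 0 < a) :
    osgoodSol C a t = a ^ exp (-(C * t)) * exp (1 - exp (-(C * t))) := by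
  rw [osgoodSol, rpow_def_of_pos ha, ← exp_add]
  ring_nf

theorem continuous_osgoodSol (C a : ℝ) : Continuous (osgoodSol C a) := by
  unfold osgoodSol
  fun_prop

theorem monotone_osgoodSol {C a : ℝ} (hC : 0 ≤ C) (ha : log a ≤ 1) :
    Monotone (osgoodSol C a) := fun s t hst => by
  have hdecay : exp (-(C * t)) ≤ exp (-(C * s)) := exp_le_exp.2 (by nlinarith)
  exact exp_le_exp.2 (by linarith [mul_le_mul_of_nonpos_right hdecay (sub_nonpos.2 ha)])

theorem hasDerivAt_osgoodSol {C a t : ℝ} (h : osgoodSol C a t ≤ 1) :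
    HasDerivAt (osgoodSol C a) (C * qlLambda (osgoodSol C a t)) t := by
  rw [qlLambda_of_le_one h]
  have hexp : HasDerivAt (fun t => exp (-(C * t))) (exp (-(C * t)) * -C) t := by
    simpa using ((hasDerivAt_id t).const_mul C).neg.exp
  refine ((hexp.mul_const (log a - 1)).const_add 1).exp.congr_deriv ?_
  rw [osgoodSol, log_exp]
  ring

theorem integral_qlLambda_osgoodSol {C a t : ℝ} (hC : 0 ≤ C) (ha : 0 < a) (hae : log a ≤ 1)
    (ht : 0 ≤ t) (h : osgoodSol C a t ≤ 1) :
    C * ∫ τ in (0 : ℝ)..t, qlLambda (osgoodSol C a τ) = osgoodSol C a t - a := by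
  have hftc : ∫ τ in (0 : ℝ)..t, C * qlLambda (osgoodSol C a τ) =
      osgoodSol C a t - osgoodSol C a 0 := by
    refine intervalIntegral.integral_eq_sub_of_hasDerivAt (fun τ hτ => ?_)
      (((continuous_qlLambda.comp (continuous_osgoodSol C a)).const_mul C).intervalIntegrable _ _)
    rw [uIcc_of_le ht] at hτ
    exact hasDerivAt_osgoodSol ((monotone_osgoodSol hC hae hτ.2).trans h)
  rw [← intervalIntegral.integral_const_mul, hftc, osgoodSol_zero C ha]

theorem lt_osgoodSol {T C y₀ a : ℝ} {y : ℝ → ℝ} (hC : 0 ≤ C) (ha : 0 < a) (hya : y₀ < a)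
    (hae : log a ≤ 1) (hcont : ContinuousOn y (Icc 0 T))
    (hrange : ∀ t ∈ Icc (0 : ℝ) T, y t ∈ Icc (0 : ℝ) 1)
    (hineq : ∀ t ∈ Icc (0 : ℝ) T, y t ≤ y₀ + C * ∫ τ in (0 : ℝ)..t, qlLambda (y τ)) :
    ∀ t ∈ Icc 0 T, y t < osgoodSol C a t := by
  intro t ht
  have hsub : Icc 0 t ⊆ Icc 0 T := Icc_subset_Icc_right ht.2
  refine lt_on_Icc_of_forall_le_imp_lt (hcont.mono hsub) (continuous_osgoodSol C a).continuousOn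
    ?_ (fun s hs hle => ?_) t (right_mem_Icc.2 ht.1)
  · have hy0 : y 0 ≤ y₀ := by simpa using hineq 0 (left_mem_Icc.2 (ht.1.trans ht.2))
    rw [osgoodSol_zero C ha]
    exact hy0.trans_lt hya
  rcases le_or_gt (osgoodSol C a s) 1 with hs1 | hs1
  swap
  · exact (hrange s (hsub (Ioc_subset_Icc_self hs))).2.trans_lt hs1
  have hmono : ∀ τ ∈ Icc 0 s, qlLambda (y τ) ≤ qlLambda (osgoodSol C a τ) := fun τ hτ => by
    have hyτ := hrange τ (hsub (Icc_subset_Icc_right hs.2 hτ))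
    have hzτ : osgoodSol C a τ ≤ 1 := (monotone_osgoodSol hC hae hτ.2).trans hs1
    exact monotoneOn_qlLambda hyτ ⟨hyτ.1.trans (hle τ hτ), hzτ⟩ (hle τ hτ)
  have hyint : IntervalIntegrable (fun τ => qlLambda (y τ)) MeasureTheory.volume 0 s :=
    (continuous_qlLambda.comp_continuousOn (hcont.mono (hsub.trans' (Icc_subset_Icc_right hs.2)))
      |>.intervalIntegrable_of_Icc hs.1.le)
  calc y s ≤ y₀ + C * ∫ τ in (0 : ℝ)..s, qlLambda (y τ) := hineq s (hsub (Ioc_subset_Icc_self hs))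
    _ ≤ y₀ + C * ∫ τ in (0 : ℝ)..s, qlLambda (osgoodSol C a τ) := by
      gcongr
      exact intervalIntegral.integral_mono_on hs.1.le hyint
        ((continuous_qlLambda.comp (continuous_osgoodSol C a)).intervalIntegrable _ _) hmono
    _ = y₀ + (osgoodSol C a s - a) := by
      rw [integral_qlLambda_osgoodSol hC ha hae hs.1.le hs1]
    _ < osgoodSol C a s := by linarith

theorem osgood_growth_general (T C y₀ : ℝ) (hC : 0 < C)
    (hy₀ : y₀ ∈ Set.Icc (0 : ℝ) 1)
    (y : ℝ → ℝ) (hcont : ContinuousOn y (Set.Icc 0 T))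
    (hrange : ∀ t ∈ Set.Icc (0 : ℝ) T, y t ∈ Set.Icc (0 : ℝ) 1)
    (hineq : ∀ t ∈ Set.Icc (0 : ℝ) T,
      y t ≤ y₀ + C * ∫ τ in (0 : ℝ)..t, qlLambda (y τ)) :
    ∀ t ∈ Set.Icc (0 : ℝ) T,
      y t ≤ y₀ ^ Real.exp (-(C * t)) * Real.exp (1 - Real.exp (-(C * t))) := by
  intro t ht
  set p := exp (-(C * t))
  have hlim : Tendsto (fun a => a ^ p * exp (1 - p)) (𝓝[>] y₀) (𝓝 (y₀ ^ p * exp (1 - p))) :=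
    ((continuousAt_rpow_const _ _ (Or.inr (exp_pos _).le)).mul_const _).tendsto.mono_left
      nhdsWithin_le_nhds
  have hy₀e : y₀ < exp 1 := hy₀.2.trans_lt (one_lt_exp_iff.2 one_pos)
  refine ge_of_tendsto hlim ?_
  filter_upwards [Ioo_mem_nhdsGT hy₀e] with a ⟨hya, hae⟩
  have ha : 0 < a := hy₀.1.trans_lt hya
  rw [← osgoodSol_eq_rpow C t ha]
  exact (lt_osgoodSol hC.le ha hya ((log_le_iff_le_exp ha).2 hae.le) hcont hrange hineq t ht).le

/-- Osgood-type growth bound: if a continuous `y : [0,T] → [0,1]` satisfies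
`y(t) ≤ y₀ + C ∫₀ᵗ λ(y(τ)) dτ`, then `y(t) ≤ y₀^{exp(-Ct)} e^{1 - exp(-Ct)}`
(real power, so `0^s = 0` for `s > 0`). -/
theorem osgood_growth (T C y₀ : ℝ) (hT : 0 < T) (hC : 0 < C)
    (hy₀ : y₀ ∈ Set.Icc (0 : ℝ) 1)
    (y : ℝ → ℝ) (hcont : ContinuousOn y (Set.Icc 0 T))
    (hrange : ∀ t ∈ Set.Icc (0 : ℝ) T, y t ∈ Set.Icc (0 : ℝ) 1)
    (hineq : ∀ t ∈ Set.Icc (0 : ℝ) T,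
      y t ≤ y₀ + C * ∫ τ in (0 : ℝ)..t, qlLambda (y τ)) :
    ∀ t ∈ Set.Icc (0 : ℝ) T,
      y t ≤ y₀ ^ Real.exp (-(C * t)) * Real.exp (1 - Real.exp (-(C * t))) :=
  osgood_growth_general T C y₀ hC hy₀ y hcont hrange hineq
end
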